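/- arXiv:1804.08710 — 2 statements merged into one kernel-verified Lean document; each statement's English description precedes it below -/
import Mathlib

section
/- Let C be a small category, and let A be a category with all filtered colimits equipped with a fully faithful functor i : A ⥤ Ind C which preserves filtered colimits and admits a left adjoint L : Ind C ⥤ A. Then A is equivalent to Ind C' for a small category C'; one may take C' to be the (essentially small) full subcategory of A spanned by the objects L(Ind.yoneda(c)) for c an object of C. -/
/-!
Every object `L (Ind.yoneda c)` is finitely presentable, because
`Hom (L (Ind.yoneda c), a) ≅ (i a).obj c` and `i` commutes with filtered colimits; and every `a : A`
is a filtered colimit of such objects, obtained by applying `L` to a filtered presentation of `i a`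
and using `L (i a) ≅ a`. A category with filtered colimits in which a full subcategory `P` of
finitely presentable objects generates every object under filtered colimits is equivalent to
`Ind P`, via the restricted Yoneda functor `a ↦ Hom (-, a)` on `P`: it is fully faithful because
maps out of a filtered colimit of objects of `P` are determined by their restrictions to `P`, and
it lands in (and hits every) ind-object because it preserves filtered colimits.
-/

open CategoryTheory Limits Opposite Cardinal

universe v u w

attribute [local instance] fact_isRegular_aleph0

namespace CategoryTheory.Ind

variable {C : Type u} [Category.{v} C]

noncomputable def coyonedaObjYonedaObjIso (c : C) :
    coyoneda.obj (op (Ind.yoneda.obj c)) ≅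
      Ind.inclusion C ⋙ (evaluation Cᵒᵖ (Type v)).obj (op c) :=
  NatIso.ofComponents
    (fun X ↦ Equiv.toIso <| Ind.inclusion.fullyFaithful.homEquiv.trans <|
      (Ind.yonedaCompInclusion.app c).homFromEquiv.trans yonedaEquiv)
    (fun f ↦ by
      ext g
      simp [Iso.homFromEquiv, yonedaEquiv_apply])

lemma isFinitelyPresentable_yoneda_obj (c : C) : IsFinitelyPresentable.{v} (Ind.yoneda.obj c) :=
  isFinitelyPresentable_iff_preservesFilteredColimits.mpr
    ⟨fun _ _ _ ↦ preservesColimitsOfShape_of_natIso (coyonedaObjYonedaObjIso c).symm⟩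

lemma isCardinalFilteredGenerator_ofObj_yoneda :
    (ObjectProperty.ofObj (Ind.yoneda (C := C)).obj).IsCardinalFilteredGenerator
      Cardinal.aleph0.{v} where
  le_isCardinalPresentable := by
    rintro _ ⟨c⟩
    exact isFinitelyPresentable_yoneda_obj c
  exists_colimitsOfShape X :=
    ⟨X.presentation.I, inferInstance, (isCardinalFiltered_aleph0_iff _).mpr inferInstance,
      ⟨(ObjectProperty.ColimitOfShape.colimit (X.presentation.F ⋙ Ind.yoneda)
        (fun _ ↦ ObjectProperty.ofObj_apply Ind.yoneda.obj _)).ofIso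
          (Ind.colimitPresentationCompYoneda X)⟩⟩

end CategoryTheory.Ind

namespace CategoryTheory.Adjunction

lemma isCardinalFilteredGenerator_ofObj {C D : Type*} [Category C] [Category D]
    {F : C ⥤ D} {G : D ⥤ C} (adj : F ⊣ G) {κ : Cardinal.{w}} [Fact κ.IsRegular]
    [G.IsCardinalAccessible κ] [G.Full] [G.Faithful] {ι : Type*} {X : ι → C}
    (hX : (ObjectProperty.ofObj X).IsCardinalFilteredGenerator κ) :
    (ObjectProperty.ofObj fun i ↦ F.obj (X i)).IsCardinalFilteredGenerator κ :=
  have h := adj.isCardinalFilteredGenerator hX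
  h.of_le_isoClosure (by rintro _ ⟨_, ⟨i⟩, ⟨e⟩⟩; exact ⟨_, ⟨i⟩, ⟨e.symm⟩⟩)
    (le_trans (by rintro _ ⟨i⟩; exact ObjectProperty.prop_map_obj _ _ ⟨i⟩)
      h.le_isCardinalPresentable)

end CategoryTheory.Adjunction

namespace CategoryTheory.ObjectProperty

variable {A : Type u} [Category.{v} A] (P : ObjectProperty A)

abbrev restrictedYoneda : A ⥤ P.FullSubcategoryᵒᵖ ⥤ Type v :=
  yoneda ⋙ (Functor.whiskeringLeft _ _ _).obj P.ι.op

def ιCompRestrictedYonedaIso : P.ι ⋙ P.restrictedYoneda ≅ yoneda :=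
  NatIso.ofComponents
    (fun X ↦ NatIso.ofComponents (fun Y ↦ P.fullyFaithfulι.homEquiv.symm.toIso))

variable {P}

lemma preservesFilteredColimits_restrictedYoneda (hP : P ≤ isFinitelyPresentable.{v} A) :
    PreservesFilteredColimitsOfSize.{v, v} P.restrictedYoneda := by
  refine ⟨fun J _ _ ↦ preservesColimitsOfShape_of_evaluation _ _ fun x ↦ ?_⟩
  have : IsFinitelyPresentable.{v} x.unop.obj := hP _ x.unop.property
  exact preservesColimitsOfShape_of_natIso (F := coyoneda.obj (op x.unop.obj)) (Iso.refl _)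

noncomputable def indObjectPresentationOfIsColimit (hP : P ≤ isFinitelyPresentable.{v} A)
    {J : Type v} [SmallCategory J] [IsFiltered J] {G : J ⥤ P.FullSubcategory}
    {c : Cocone (G ⋙ P.ι)} (hc : IsColimit c) :
    IndObjectPresentation (P.restrictedYoneda.obj c.pt) :=
  have := preservesFilteredColimits_restrictedYoneda hP
  let e : (G ⋙ P.ι) ⋙ P.restrictedYoneda ≅ G ⋙ yoneda :=
    Functor.associator _ _ _ ≪≫ Functor.isoWhiskerLeft G P.ιCompRestrictedYonedaIso
  .ofCocone _ ((IsColimit.precomposeInvEquiv e _).symm (isColimitOfPreserves _ hc))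

namespace IsCardinalFilteredGenerator

variable (hP : P.IsCardinalFilteredGenerator Cardinal.aleph0.{v})
include hP

lemma exists_isFiltered_colimitOfShape (a : A) :
    ∃ (J : Type v) (_ : SmallCategory J) (_ : IsFiltered J), Nonempty (P.ColimitOfShape J a) := by
  obtain ⟨J, _, hJ, hp⟩ := hP.exists_colimitsOfShape a
  exact ⟨J, _, (isCardinalFiltered_aleph0_iff J).mp hJ, hp⟩

lemma faithful_restrictedYoneda : P.restrictedYoneda.Faithful where
  map_injective {a b} f g h := by
    obtain ⟨J, _, _, ⟨p⟩⟩ := hP.exists_isFiltered_colimitOfShape a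
    refine p.isColimit.hom_ext fun j ↦ ?_
    exact types_congr_hom (congr_app h (op ⟨_, p.prop_diag_obj j⟩)) (p.ι.app j)

lemma full_restrictedYoneda : P.restrictedYoneda.Full where
  map_surjective {a b} η := by
    obtain ⟨J, _, _, ⟨p⟩⟩ := hP.exists_isFiltered_colimitOfShape a
    have hη {x y : P.FullSubcategory} (g : x ⟶ y) (f : y.obj ⟶ a) :
        η.app (op x) (g.hom ≫ f) = g.hom ≫ η.app (op y) f :=
      types_congr_hom (η.naturality g.op) f
    let s : Cocone p.diag :=
      { pt := b
        ι :=
          { app j := η.app (op ⟨_, p.prop_diag_obj j⟩) (p.ι.app j)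
            naturality j j' φ := by
              simpa [p.w] using (hη (x := ⟨_, p.prop_diag_obj j⟩) (y := ⟨_, p.prop_diag_obj j'⟩)
                (ObjectProperty.homMk (p.diag.map φ)) (p.ι.app j')).symm } }
    refine ⟨p.isColimit.desc s, ?_⟩
    ext ⟨x⟩ (f : x.obj ⟶ a)
    have : IsFinitelyPresentable.{v} x.obj := hP.le_isCardinalPresentable _ x.property
    obtain ⟨j, g, rfl⟩ := IsFinitelyPresentable.exists_hom_of_isColimit p.isColimit f
    have hfac : p.ι.app j ≫ p.isColimit.desc s = s.ι.app j := p.isColimit.fac s j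
    simpa [hfac, s] using (hη (y := ⟨_, p.prop_diag_obj j⟩) (ObjectProperty.homMk g) (p.ι.app j)).symm

lemma isIndObject_restrictedYoneda_obj (a : A) : IsIndObject (P.restrictedYoneda.obj a) := by
  obtain ⟨J, _, _, ⟨p⟩⟩ := hP.exists_isFiltered_colimitOfShape a
  exact .mk (indObjectPresentationOfIsColimit (G := P.lift p.diag p.prop_diag_obj)
    hP.le_isCardinalPresentable p.isColimit)

noncomputable abbrev restrictedYonedaToIndObjects :
    A ⥤ ObjectProperty.FullSubcategory (IsIndObject (C := P.FullSubcategory)) :=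
  ObjectProperty.lift _ P.restrictedYoneda hP.isIndObject_restrictedYoneda_obj

lemma essSurj_restrictedYonedaToIndObjects [HasFilteredColimits A] :
    hP.restrictedYonedaToIndObjects.EssSurj where
  mem_essImage X := by
    let pres := X.property.presentation
    let pres' := indObjectPresentationOfIsColimit hP.le_isCardinalPresentable
      (colimit.isColimit (pres.F ⋙ P.ι))
    exact ⟨_, ⟨(ObjectProperty.fullyFaithfulι _).preimageIso
      (pres'.coconeIsColimit.coconePointUniqueUpToIso pres.coconeIsColimit)⟩⟩

noncomputable def equivalenceInd [HasFilteredColimits A] : A ≌ Ind P.FullSubcategory :=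
  have := hP.full_restrictedYoneda
  have := hP.faithful_restrictedYoneda
  have := hP.essSurj_restrictedYonedaToIndObjects
  have : hP.restrictedYonedaToIndObjects.IsEquivalence := {}
  hP.restrictedYonedaToIndObjects.asEquivalence.trans (Ind.equivalence _).symm

end IsCardinalFilteredGenerator

end CategoryTheory.ObjectProperty

/-- Let `C` be a small category and `A` a category with all filtered colimits, equipped with a
fully faithful functor `i : A ⥤ Ind C` preserving filtered colimits and admitting a left
adjoint `L`. Then `A` is equivalent to `Ind C'`, where `C'` is the (essentially small) full
subcategory of `A` spanned by the objects `L (Ind.yoneda c)` for `c : C`. -/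
theorem equiv_ind_of_reflective {C : Type v} [SmallCategory C]
    {A : Type u} [Category.{v} A] [HasFilteredColimits A]
    (i : A ⥤ Ind C) [i.Full] [i.Faithful] [PreservesFilteredColimits i]
    (L : Ind C ⥤ A) (adj : L ⊣ i) :
    EssentiallySmall.{v}
        (ObjectProperty.FullSubcategory (fun a : A => ∃ c : C, L.obj (Ind.yoneda.obj c) = a)) ∧
      Nonempty
        (A ≌ Ind (ObjectProperty.FullSubcategory (fun a : A => ∃ c : C, L.obj (Ind.yoneda.obj c) = a))) := by
  have : i.IsCardinalAccessible ℵ₀ :=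
    Functor.isFinitelyAccessible_iff_preservesFilteredColimits.mpr ‹_›
  have hgen := adj.isCardinalFilteredGenerator_ofObj Ind.isCardinalFilteredGenerator_ofObj_yoneda
  have hC' : (fun a : A => ∃ c : C, L.obj (Ind.yoneda.obj c) = a) =
      ObjectProperty.ofObj fun c ↦ L.obj (Ind.yoneda.obj c) :=
    funext fun a ↦ propext (ObjectProperty.ofObj_iff _ a).symm
  rw [hC']
  exact ⟨inferInstance, ⟨hgen.equivalenceInd⟩⟩
end

section
/- Let C and C' be small categories with all finite colimits, and let f : C ⥤ C' be a functor preserving finite colimits. Let F : Ind C ⥤ Ind C' be a filtered-colimit-preserving functor equipped with a natural isomorphism F ∘ Ind.yoneda ≅ Ind.yoneda ∘ f (such an F exists and is unique up to natural isomorphism). Then F admits a right adjoint. -/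
/-!
Every ind-object is the colimit of the representables mapping to it, i.e. `Ind.yoneda` is dense,
and these colimits are filtered; so a functor out of `Ind C` preserving filtered colimits is the
left Kan extension of its restriction to `C`. The left Kan extension `f.op.lan` of presheaves is
such a functor extending `f`, and it is left adjoint to precomposition with `f.op`. When `f` is
right exact, precomposition with `f.op` preserves left exact presheaves, which over a finitely
cocomplete category are exactly the ind-objects; hence the adjunction restricts to `Ind`, where its
left adjoint agrees with `F`.
-/

open CategoryTheory Limits

universe v

namespace CategoryTheory

section Dense

variable {C D E : Type*} [Category* C] [Category* D] [Category* E]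

noncomputable def Functor.DenseAt.ofCompFullyFaithful {F : C ⥤ D} {G : D ⥤ E} [G.Full]
    [G.Faithful] {Y : D} (h : (F ⋙ G).DenseAt (G.obj Y)) : F.DenseAt Y :=
  isColimitOfReflects G <|
    (h.whiskerEquivalence (CostructuredArrow.post F G Y).asEquivalence).ofIsoColimit
      (Cocone.ext (Iso.refl _) fun _ => by
        -- `simp` misses these identities: they are typed at objects such as
        -- `(CostructuredArrow.proj F Y).obj _`, which unfold only at default transparency
        simp [LeftExtension.mk]; erw [Category.id_comp, Category.id_comp, Category.comp_id]; rfl)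

lemma Functor.isLeftKanExtension_of_isDense (F : C ⥤ D) [F.IsDense] (M : D ⥤ E)
    [∀ Y, PreservesColimitsOfShape (CostructuredArrow F Y) M] :
    M.IsLeftKanExtension (𝟙 (F ⋙ M)) :=
  let h : (LeftExtension.mk M (𝟙 (F ⋙ M))).IsPointwiseLeftKanExtension := fun Y =>
    (isColimitOfPreserves M (F.denseAt Y)).ofIsoColimit (Cocone.ext (Iso.refl _) fun _ => by
      simp [LeftExtension.mk]; erw [Category.id_comp, Category.id_comp, Category.comp_id]; rfl)
  h.isLeftKanExtension

noncomputable def Functor.isoOfIsDense (F : C ⥤ D) [F.IsDense] {M N : D ⥤ E}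
    [∀ Y, PreservesColimitsOfShape (CostructuredArrow F Y) M]
    [∀ Y, PreservesColimitsOfShape (CostructuredArrow F Y) N] (i : F ⋙ M ≅ F ⋙ N) :
    M ≅ N :=
  have := F.isLeftKanExtension_of_isDense M
  have := F.isLeftKanExtension_of_isDense N
  Functor.leftKanExtensionUniqueOfIso M (𝟙 _) i N (𝟙 _)

end Dense

variable {C C' : Type v} [SmallCategory C] [SmallCategory C']

instance Ind.isDense_yoneda : (Ind.yoneda (C := C)).IsDense where
  isDenseAt _ := ⟨.ofCompFullyFaithful (G := Ind.inclusion C)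
    ((denseAtYoneda _).ofNatIso Ind.yonedaCompInclusion.symm)⟩

noncomputable def Ind.lift {D : Type*} [Category* D]
    (P : D ⥤ Cᵒᵖ ⥤ Type v) (hP : ∀ X, IsIndObject (P.obj X)) : D ⥤ Ind C :=
  ObjectProperty.lift _ P hP ⋙ (Ind.equivalence C).inverse

noncomputable def Ind.liftCompInclusion {D : Type*} [Category* D]
    (P : D ⥤ Cᵒᵖ ⥤ Type v) (hP : ∀ X, IsIndObject (P.obj X)) :
    Ind.lift P hP ⋙ Ind.inclusion C ≅ P :=
  Functor.isoWhiskerLeft (ObjectProperty.lift _ P hP)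
    (Functor.isoWhiskerRight (Ind.equivalence C).counitIso (ObjectProperty.ι _))

noncomputable def yonedaCompLanIso (f : C ⥤ C') : yoneda ⋙ f.op.lan ≅ f ⋙ yoneda :=
  Functor.isoWhiskerRight uliftYonedaIsoYoneda.{v}.symm _ ≪≫
    (Presheaf.compULiftYonedaIsoULiftYonedaCompLan.{0} f).symm ≪≫
    Functor.isoWhiskerLeft f uliftYonedaIsoYoneda.{v}

theorem Limits.IsIndObject.op_comp [HasFiniteColimits C] [HasFiniteColimits C']
    {A : C'ᵒᵖ ⥤ Type v} (hA : IsIndObject A) (f : C ⥤ C') [PreservesFiniteColimits f] :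
    IsIndObject (f.op ⋙ A) := by
  rw [isIndObject_iff_preservesFiniteLimits] at hA ⊢
  have := preservesFiniteLimits_op f
  exact comp_preservesFiniteLimits _ _

end CategoryTheory

/-- Let `C` and `C'` be small categories with all finite colimits and `f : C ⥤ C'` a functor
preserving finite colimits. Any filtered-colimit-preserving functor `F : Ind C ⥤ Ind C'`
equipped with a natural isomorphism `Ind.yoneda ⋙ F ≅ f ⋙ Ind.yoneda` admits a right
adjoint. -/
theorem ind_extension_isLeftAdjoint {C : Type v} [SmallCategory C]
    {C' : Type v} [SmallCategory C'] [HasFiniteColimits C] [HasFiniteColimits C']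
    (f : C ⥤ C') [PreservesFiniteColimits f]
    (F : Ind C ⥤ Ind C') [PreservesFilteredColimits F]
    (e : Ind.yoneda ⋙ F ≅ f ⋙ Ind.yoneda) :
    F.IsLeftAdjoint := by
  let adj := f.op.lanAdjunction (Type v)
  let restrict := Ind.inclusion C' ⋙ (Functor.whiskeringLeft _ _ (Type v)).obj f.op
  have hrestrict (Y : Ind C') : IsIndObject (restrict.obj Y) :=
    Y.isIndObject_inclusion_obj.op_comp f
  have : PreservesColimitsOfSize.{v, v} f.op.lan := adj.leftAdjoint_preservesColimits
  let hlan : Ind.inclusion C ⋙ f.op.lan ≅ F ⋙ Ind.inclusion C' :=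
    Functor.isoOfIsDense Ind.yoneda
      (Functor.isoWhiskerRight Ind.yonedaCompInclusion f.op.lan ≪≫ yonedaCompLanIso f ≪≫
        Functor.isoWhiskerLeft f Ind.yonedaCompInclusion.symm ≪≫
        Functor.isoWhiskerRight e.symm (Ind.inclusion C'))
  exact ⟨_, ⟨adj.restrictFullyFaithful Ind.inclusion.fullyFaithful Ind.inclusion.fullyFaithful
    hlan (Ind.liftCompInclusion restrict hrestrict).symm⟩⟩
end
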